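/- arXiv:2311.12811 — 13 statements merged into one kernel-verified Lean document; each statement's English description precedes it below -/
import Mathlib

section
/- Consider the red dice R₁ = (22,44,99), R₂ = (21,46,98), R₃ = (23,45,97) and the blue dice B₁ = (12,64,89), B₂ = (11,66,88), B₃ = (13,65,87). Then every red die beats every blue die with probability 5/9: for all i, j ∈ {1,2,3}, die Rᵢ beats die Bⱼ with probability 5/9. -/
/-- The number of the 9 pairs `(i, j)` for which face `i` of die `X` shows a
greater number than face `j` of die `Y` (each die is a triple of naturals,
each value appearing with probability 1/3). -/
def winPairs (X Y : Fin 3 → ℕ) : ℕ :=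
  ((Finset.univ : Finset (Fin 3 × Fin 3)).filter (fun p => Y p.2 < X p.1)).card

/-- Die `X` beats die `Y` with probability 5/9, i.e. exactly 5 of the 9
pairs of faces are wins for `X`. -/
def BeatsFiveNinths (X Y : Fin 3 → ℕ) : Prop := winPairs X Y = 5

/-- Every red die beats every blue die with probability 5/9. -/
theorem red_beats_blue
    (R : Fin 3 → Fin 3 → ℕ) (hR : R = ![![22, 44, 99], ![21, 46, 98], ![23, 45, 97]])
    (B : Fin 3 → Fin 3 → ℕ) (hB : B = ![![12, 64, 89], ![11, 66, 88], ![13, 65, 87]]) :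
    ∀ i j : Fin 3, BeatsFiveNinths (R i) (B j) := by
  subst hR hB
  intro i j
  unfold BeatsFiveNinths winPairs
  fin_cases i <;> fin_cases j <;> decide
end

section
/- Consider the blue dice B₁ = (12,64,89), B₂ = (11,66,88), B₃ = (13,65,87) and the green dice G₁ = (32,54,79), G₂ = (31,56,78), G₃ = (33,55,77). Then every blue die beats every green die with probability 5/9: for all i, j ∈ {1,2,3}, die Bᵢ beats die Gⱼ with probability 5/9. -/
/-- Every blue die beats every green die with probability 5/9. -/
theorem blue_beats_green
    (B : Fin 3 → Fin 3 → ℕ) (hB : B = ![![12, 64, 89], ![11, 66, 88], ![13, 65, 87]])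
    (G : Fin 3 → Fin 3 → ℕ) (hG : G = ![![32, 54, 79], ![31, 56, 78], ![33, 55, 77]]) :
    ∀ i j : Fin 3, BeatsFiveNinths (B i) (G j) := by
  subst hB hG
  intro i j
  unfold BeatsFiveNinths winPairs
  fin_cases i <;> fin_cases j <;> decide
end

section
/- Consider the green dice G₁ = (32,54,79), G₂ = (31,56,78), G₃ = (33,55,77) and the red dice R₁ = (22,44,99), R₂ = (21,46,98), R₃ = (23,45,97). Then every green die beats every red die with probability 5/9: for all i, j ∈ {1,2,3}, die Gᵢ beats die Rⱼ with probability 5/9. -/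
/-- Every green die beats every red die with probability 5/9. -/
theorem green_beats_red
    (G : Fin 3 → Fin 3 → ℕ) (hG : G = ![![32, 54, 79], ![31, 56, 78], ![33, 55, 77]])
    (R : Fin 3 → Fin 3 → ℕ) (hR : R = ![![22, 44, 99], ![21, 46, 98], ![23, 45, 97]]) :
    ∀ i j : Fin 3, BeatsFiveNinths (G i) (R j) := by
  subst hG hR
  intro i j
  unfold BeatsFiveNinths winPairs
  fin_cases i <;> fin_cases j <;> decide
end

section
/- The red dice R₁ = (22,44,99), R₂ = (21,46,98), R₃ = (23,45,97) form a nontransitive cycle among themselves: R₁ beats R₂ with probability 5/9, R₂ beats R₃ with probability 5/9, and R₃ beats R₁ with probability 5/9. -/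
/-- The three red dice form a nontransitive cycle among themselves. -/
theorem red_dice_nontransitive :
    BeatsFiveNinths ![22, 44, 99] ![21, 46, 98] ∧
    BeatsFiveNinths ![21, 46, 98] ![23, 45, 97] ∧
    BeatsFiveNinths ![23, 45, 97] ![22, 44, 99] := by
  refine ⟨?_,?_,?_⟩ <;> unfold BeatsFiveNinths winPairs <;> decide
end

section
/- The blue dice B₁ = (12,64,89), B₂ = (11,66,88), B₃ = (13,65,87) form a nontransitive cycle among themselves: B₁ beats B₂ with probability 5/9, B₂ beats B₃ with probability 5/9, and B₃ beats B₁ with probability 5/9. -/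
/-- The three blue dice form a nontransitive cycle among themselves. -/
theorem blue_dice_nontransitive :
    BeatsFiveNinths ![12, 64, 89] ![11, 66, 88] ∧
    BeatsFiveNinths ![11, 66, 88] ![13, 65, 87] ∧
    BeatsFiveNinths ![13, 65, 87] ![12, 64, 89] := by
  refine ⟨?_, ?_, ?_⟩ <;> unfold BeatsFiveNinths winPairs <;> decide
end

section
/- The green dice G₁ = (32,54,79), G₂ = (31,56,78), G₃ = (33,55,77) form a nontransitive cycle among themselves: G₁ beats G₂ with probability 5/9, G₂ beats G₃ with probability 5/9, and G₃ beats G₁ with probability 5/9. -/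
/-- The three green dice form a nontransitive cycle among themselves. -/
theorem green_dice_nontransitive :
    BeatsFiveNinths ![32, 54, 79] ![31, 56, 78] ∧
    BeatsFiveNinths ![31, 56, 78] ![33, 55, 77] ∧
    BeatsFiveNinths ![33, 55, 77] ![32, 54, 79] := by
  refine ⟨?_, ?_, ?_⟩ <;> (unfold BeatsFiveNinths winPairs; decide)
end

section
/- For the 27 dice D1,…,D27 defined in the context, every one of the nine dice D1,…,D9 beats every one of the nine dice D10,…,D18 with probability 5/9. -/
/-- The 27 dice D1, ..., D27 (indexed here by 0, ..., 26). -/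
def D : Fin 27 → Fin 3 → ℕ :=
  ![![222, 489, 954], ![221, 488, 956], ![223, 487, 955],
    ![299, 464, 932], ![298, 466, 931], ![297, 465, 933],
    ![244, 412, 979], ![246, 411, 978], ![245, 413, 977],
    ![122, 689, 854], ![121, 688, 856], ![123, 687, 855],
    ![199, 664, 832], ![198, 666, 831], ![197, 665, 833],
    ![144, 612, 879], ![146, 611, 878], ![145, 613, 877],
    ![322, 589, 754], ![321, 588, 756], ![323, 587, 755],
    ![399, 564, 732], ![398, 566, 731], ![397, 565, 733],
    ![344, 512, 779], ![346, 511, 778], ![345, 513, 777]]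

/-- Every one of the nine dice D1, ..., D9 beats every one of the nine dice
D10, ..., D18 with probability 5/9. -/
theorem first_nine_beat_second_nine :
    ∀ i j : Fin 9,
      BeatsFiveNinths (D ⟨i.val, by omega⟩) (D ⟨9 + j.val, by omega⟩) := by
  intro i j
  unfold BeatsFiveNinths winPairs
  fin_cases i <;> fin_cases j <;> decide
end

section
/- Within the set D1,…,D9 of the 27 dice defined in the context, the three triples form a nontransitive cycle of sets: every one of D1, D2, D3 beats every one of D4, D5, D6 with probability 5/9; every one of D4, D5, D6 beats every one of D7, D8, D9 with probability 5/9; and every one of D7, D8, D9 beats every one of D1, D2, D3 with probability 5/9. -/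
/-- Within D1, ..., D9 the three triples {D1,D2,D3}, {D4,D5,D6}, {D7,D8,D9}
form a nontransitive cycle of sets, every die of one triple beating every die
of the next triple with probability 5/9. -/
theorem first_block_triples_cycle :
    (∀ i j : Fin 3, BeatsFiveNinths (D ⟨i.val, by omega⟩) (D ⟨3 + j.val, by omega⟩)) ∧
    (∀ i j : Fin 3, BeatsFiveNinths (D ⟨3 + i.val, by omega⟩) (D ⟨6 + j.val, by omega⟩)) ∧
    (∀ i j : Fin 3, BeatsFiveNinths (D ⟨6 + i.val, by omega⟩) (D ⟨j.val, by omega⟩)) := by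
  refine ⟨?_, ?_, ?_⟩ <;> intro i j <;>
    fin_cases i <;> fin_cases j <;> simp only [BeatsFiveNinths] <;> decide
end

section
/- Within the set D10,…,D18 of the 27 dice defined in the context, the three triples form a nontransitive cycle of sets: every one of D10, D11, D12 beats every one of D13, D14, D15 with probability 5/9; every one of D13, D14, D15 beats every one of D16, D17, D18 with probability 5/9; and every one of D16, D17, D18 beats every one of D10, D11, D12 with probability 5/9. -/
/-- Within D10, ..., D18 the three triples {D10,D11,D12}, {D13,D14,D15},
{D16,D17,D18} form a nontransitive cycle of sets, every die of one triple
beating every die of the next triple with probability 5/9. -/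
theorem second_block_triples_cycle :
    (∀ i j : Fin 3, BeatsFiveNinths (D ⟨9 + i.val, by omega⟩) (D ⟨12 + j.val, by omega⟩)) ∧
    (∀ i j : Fin 3, BeatsFiveNinths (D ⟨12 + i.val, by omega⟩) (D ⟨15 + j.val, by omega⟩)) ∧
    (∀ i j : Fin 3, BeatsFiveNinths (D ⟨15 + i.val, by omega⟩) (D ⟨9 + j.val, by omega⟩)) := by
  refine ⟨?_, ?_, ?_⟩ <;> (intro i j; fin_cases i <;> fin_cases j <;> (unfold BeatsFiveNinths; decide))
end

section
/- Within the set D19,…,D27 of the 27 dice defined in the context, the three triples form a nontransitive cycle of sets: every one of D19, D20, D21 beats every one of D22, D23, D24 with probability 5/9; every one of D22, D23, D24 beats every one of D25, D26, D27 with probability 5/9; and every one of D25, D26, D27 beats every one of D19, D20, D21 with probability 5/9. -/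
/-- Within D19, ..., D27 the three triples {D19,D20,D21}, {D22,D23,D24},
{D25,D26,D27} form a nontransitive cycle of sets, every die of one triple
beating every die of the next triple with probability 5/9. -/
theorem third_block_triples_cycle :
    (∀ i j : Fin 3, BeatsFiveNinths (D ⟨18 + i.val, by omega⟩) (D ⟨21 + j.val, by omega⟩)) ∧
    (∀ i j : Fin 3, BeatsFiveNinths (D ⟨21 + i.val, by omega⟩) (D ⟨24 + j.val, by omega⟩)) ∧
    (∀ i j : Fin 3, BeatsFiveNinths (D ⟨24 + i.val, by omega⟩) (D ⟨18 + j.val, by omega⟩)) := by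
  refine ⟨?_, ?_, ?_⟩ <;> · unfold BeatsFiveNinths; decide
end

section
/- At the innermost level of the 27-dice structure defined in the context, each consecutive triple of dice forms a nontransitive cycle: for every k ∈ {0,1,2,3,4,5,6,7,8}, die D(3k+1) beats die D(3k+2) with probability 5/9, die D(3k+2) beats die D(3k+3) with probability 5/9, and die D(3k+3) beats die D(3k+1) with probability 5/9. -/
/-- At the innermost level, each consecutive triple D(3k+1), D(3k+2), D(3k+3)
(k = 0, ..., 8) forms a nontransitive cycle, each win with probability 5/9. -/
theorem innermost_triples_cycle :
    ∀ k : Fin 9,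
      BeatsFiveNinths (D ⟨3 * k.val, by omega⟩) (D ⟨3 * k.val + 1, by omega⟩) ∧
      BeatsFiveNinths (D ⟨3 * k.val + 1, by omega⟩) (D ⟨3 * k.val + 2, by omega⟩) ∧
      BeatsFiveNinths (D ⟨3 * k.val + 2, by omega⟩) (D ⟨3 * k.val, by omega⟩) := by
  intro k
  refine ⟨?_, ?_, ?_⟩ <;> unfold BeatsFiveNinths <;> fin_cases k <;> decide
end

section
/- The nine dice R₁ = (22,44,99), R₂ = (21,46,98), R₃ = (23,45,97), B₁ = (12,64,89), B₂ = (11,66,88), B₃ = (13,65,87), G₁ = (32,54,79), G₂ = (31,56,78), G₃ = (33,55,77) realize meta-intransitivity of the first level: the three sets {R₁,R₂,R₃}, {B₁,B₂,B₃}, {G₁,G₂,G₃} form a cycle in which every die of one set beats every die of the next set (red over blue, blue over green, green over red) with probability 5/9, and simultaneously inside each of the three sets the three dice form their own nontransitive cycle, each win occurring with probability 5/9. -/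
/-- A family `F` of three triples of dice realizes meta-intransitivity of the
first level: the three triples beat one another cyclically (every die of one
triple beats every die of the next triple in the cycle with probability 5/9),
and within each triple the three dice form a nontransitive cycle with each
win of probability 5/9.  (Addition in `Fin 3` is cyclic.) -/
def MetaIntransitiveFirstLevel (F : Fin 3 → Fin 3 → Fin 3 → ℕ) : Prop :=
  (∀ s i j : Fin 3, BeatsFiveNinths (F s i) (F (s + 1) j)) ∧
  (∀ s i : Fin 3, BeatsFiveNinths (F s i) (F s (i + 1)))

/-- The nine dice R₁, R₂, R₃ (red), B₁, B₂, B₃ (blue), G₁, G₂, G₃ (green)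
realize meta-intransitivity of the first level: red beats blue, blue beats
green, green beats red (every die of one set beating every die of the next
with probability 5/9), and inside each set the three dice form their own
nontransitive cycle, each win with probability 5/9. -/
theorem nine_dice_meta_intransitive_first_level :
    MetaIntransitiveFirstLevel
      ![![![22, 44, 99], ![21, 46, 98], ![23, 45, 97]],
        ![![12, 64, 89], ![11, 66, 88], ![13, 65, 87]],
        ![![32, 54, 79], ![31, 56, 78], ![33, 55, 77]]] := by
  unfold MetaIntransitiveFirstLevel BeatsFiveNinths winPairs
  constructor <;> decide
end

section
/- The 27 dice D1,…,D27 defined in the context realize meta-intransitivity of the second level: (i) the three nine-element sets {D1,…,D9}, {D10,…,D18}, {D19,…,D27} form a cycle in which every die of one set beats every die of the next set with probability 5/9; (ii) within each nine-element set, the three consecutive triples of dice form a cycle in which every die of one triple beats every die of the next triple with probability 5/9; and (iii) within each triple {D(3k+1), D(3k+2), D(3k+3)} (k = 0,…,8), the three dice form a nontransitive cycle, each win occurring with probability 5/9. -/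
/-- The 27 dice D1, ..., D27 realize meta-intransitivity of the second level:
(i) the three nine-element sets {D1,...,D9}, {D10,...,D18}, {D19,...,D27} beat
one another cyclically, every die of one set beating every die of the next set
with probability 5/9;
(ii) within each nine-element set, the three consecutive triples beat one
another cyclically, every die of one triple beating every die of the next
triple with probability 5/9;
(iii) within each triple {D(3k+1), D(3k+2), D(3k+3)} (k = 0, ..., 8), the
three dice form a nontransitive cycle, each win with probability 5/9. -/
theorem meta_intransitivity_second_level :
    (∀ b : Fin 3, ∀ i j : Fin 9,
      BeatsFiveNinths (D ⟨9 * b.val + i.val, by omega⟩)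
        (D ⟨9 * ((b.val + 1) % 3) + j.val, by omega⟩)) ∧
    (∀ b t : Fin 3, ∀ r r' : Fin 3,
      BeatsFiveNinths (D ⟨9 * b.val + 3 * t.val + r.val, by omega⟩)
        (D ⟨9 * b.val + 3 * ((t.val + 1) % 3) + r'.val, by omega⟩)) ∧
    (∀ k : Fin 9, ∀ r : Fin 3,
      BeatsFiveNinths (D ⟨3 * k.val + r.val, by omega⟩)
        (D ⟨3 * k.val + (r.val + 1) % 3, by omega⟩)) := by
  simp only [BeatsFiveNinths]
  decide
end
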